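/- If s is an adult digit string (all digits ≥ 4) in which no digit appears more than 9 times consecutively, then Z(Z(Z(s))) = Z(Z(s)). In particular, the sequence Z^n(s) is eventually constant. -/

import Mathlib

/-- Run-length encoding of a digit string. -/
def rle : List ℕ → List (ℕ × ℕ)
  | [] => []
  | a :: t =>
    match rle t with
    | [] => [(a, 1)]
    | (b, n) :: r => if a = b then (b, n + 1) :: r else (a, 1) :: (b, n) :: r

/-- The "look-and-say-the-biggest" map: each maximal run of the digit `a` of length `n`
is replaced by the decimal digits of `max n a` followed by the digit `a`.
(When `n ≤ 9` this is just the two digits `max n a`, `a`.) -/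
def Z (s : List ℕ) : List ℕ :=
  ((rle s).map fun p => (Nat.digits 10 (max p.2 p.1)).reverse ++ [p.1]).flatten

/-- `r` is a run-length representation of the digit string `s`: all run lengths are
positive, consecutive base digits differ, and the expansion of `r` equals `s`. -/
def IsRLE (r : List (ℕ × ℕ)) (s : List ℕ) : Prop :=
  (∀ p ∈ r, 1 ≤ p.2) ∧ (r.map Prod.fst).Chain' (· ≠ ·) ∧
    (r.map fun p => List.replicate p.2 p.1).flatten = s

/-! For digits and run lengths at most 9, `Z` writes the run `(a, n)` as the two digits
`max n a, a`. The second digits of consecutive pairs differ, so every run of `Z s` has length at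
most 3. If `s` is adult, each run of `Z s` is therefore shorter than its digit, and `Z (Z s)` is
`a a b b c c …` with consecutive letters distinct; a doubled string of this form whose digits are at
least 2 is a fixed point of `Z`. -/

lemma rle_cons_cases (a : ℕ) (t : List ℕ) :
    (∃ n r, rle t = (a, n) :: r ∧ rle (a :: t) = (a, n + 1) :: r) ∨
      ((∀ p ∈ (rle t).head?, p.1 ≠ a) ∧ rle (a :: t) = (a, 1) :: rle t) := by
  rcases h : rle t with _ | ⟨⟨b, n⟩, r⟩
  · simp [rle, h]
  · by_cases hab : a = b
    · subst hab
      simp [rle, h]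
    · simp [rle, h, Ne.symm hab, hab]

lemma flatMap_rle (t : List ℕ) : (rle t).flatMap (fun p => List.replicate p.2 p.1) = t := by
  induction t with
  | nil => rfl
  | cons a t ih =>
    rcases rle_cons_cases a t with ⟨n, r, ht, hat⟩ | ⟨-, hat⟩
    · rw [ht] at ih
      simpa [hat, List.replicate_succ] using ih
    · simpa [hat] using ih

lemma one_le_snd_of_mem_rle {t : List ℕ} {p : ℕ × ℕ} (hp : p ∈ rle t) : 1 ≤ p.2 := by
  induction t generalizing p with
  | nil => simp [rle] at hp
  | cons a t ih =>
    rcases rle_cons_cases a t with ⟨n, r, ht, hat⟩ | ⟨-, hat⟩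
    · rw [hat] at hp
      rcases List.mem_cons.mp hp with rfl | hp
      · simp
      · exact ih (by simp [ht, hp])
    · rw [hat] at hp
      rcases List.mem_cons.mp hp with rfl | hp
      · simp
      · exact ih hp

lemma isChain_map_fst_rle (t : List ℕ) : ((rle t).map Prod.fst).IsChain (· ≠ ·) := by
  induction t with
  | nil => simp [rle]
  | cons a t ih =>
    rcases rle_cons_cases a t with ⟨n, r, ht, hat⟩ | ⟨hne, hat⟩
    · simpa [hat, ht] using ih
    · rw [hat, List.map_cons, List.isChain_cons, List.head?_map]
      refine ⟨?_, ih⟩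
      simpa [ne_comm] using hne

lemma replicate_infix_of_mem_rle {t : List ℕ} {p : ℕ × ℕ} (hp : p ∈ rle t) :
    List.replicate p.2 p.1 <:+: t := by
  conv_rhs => rw [← flatMap_rle t]
  exact List.infix_of_mem_flatten (List.mem_map_of_mem hp)

lemma fst_mem_of_mem_rle {t : List ℕ} {p : ℕ × ℕ} (hp : p ∈ rle t) : p.1 ∈ t :=
  (replicate_infix_of_mem_rle hp).subset
    (List.mem_replicate.mpr ⟨by have := one_le_snd_of_mem_rle hp; omega, rfl⟩)

lemma rle_flatMap_pair_self {L : List ℕ} (hL : L.IsChain (· ≠ ·)) :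
    rle (L.flatMap fun a => [a, a]) = L.map fun a => (a, 2) := by
  induction L with
  | nil => rfl
  | cons a L ih =>
    cases L with
    | nil => simp [rle]
    | cons b L =>
      obtain ⟨hab, hL⟩ := List.isChain_cons_cons.mp hL
      have := ih hL
      simp only [List.flatMap_cons, List.map_cons, List.cons_append, List.nil_append] at this ⊢
      rw [rle.eq_2, rle.eq_2, this]
      simp [hab]

lemma Z_eq_flatMap_of_runs_le_nine {t : List ℕ} (ht : ∀ p ∈ rle t, p.1 ≤ 9 ∧ p.2 ≤ 9) :
    Z t = (rle t).flatMap fun p => [max p.2 p.1, p.1] := by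
  refine List.flatMap_congr fun p hp => ?_
  have := one_le_snd_of_mem_rle hp
  have := ht p hp
  rw [Nat.digits_of_lt 10 _ (by omega) (by omega)]
  rfl

lemma Z_eq_flatMap_pair_self {t : List ℕ} (ht : ∀ p ∈ rle t, p.2 ≤ p.1 ∧ p.1 ≤ 9) :
    Z t = ((rle t).map Prod.fst).flatMap fun a => [a, a] := by
  rw [Z_eq_flatMap_of_runs_le_nine fun p hp => ⟨(ht p hp).2, (ht p hp).1.trans (ht p hp).2⟩,
    List.flatMap_map]
  exact List.flatMap_congr fun p hp => by rw [max_eq_right (ht p hp).1]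

lemma Z_flatMap_pair_self {L : List ℕ} (hL : L.IsChain (· ≠ ·)) (h : ∀ a ∈ L, 2 ≤ a ∧ a ≤ 9) :
    Z (L.flatMap fun a => [a, a]) = L.flatMap fun a => [a, a] := by
  rw [Z_eq_flatMap_pair_self (by simpa [rle_flatMap_pair_self hL] using h),
    rle_flatMap_pair_self hL, List.map_map]
  exact congrArg _ (List.map_id L)

lemma Z_Z_eq_Z {t : List ℕ} (ht : ∀ p ∈ rle t, 2 ≤ p.1 ∧ p.2 ≤ p.1 ∧ p.1 ≤ 9) :
    Z (Z t) = Z t := by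
  rw [Z_eq_flatMap_pair_self fun p hp => (ht p hp).2]
  exact Z_flatMap_pair_self (isChain_map_fst_rle t)
    (by simpa using fun a n hp => ⟨(ht (a, n) hp).1, (ht (a, n) hp).2.2⟩)

lemma not_replicate_four_infix_flatMap {α β : Type*} (f g : β → α) {L : List β}
    (hL : (L.map g).IsChain (· ≠ ·)) (d : α) :
    ¬ List.replicate 4 d <:+: L.flatMap fun b => [f b, g b] := by
  -- any four consecutive letters contain the `g`-letters of two consecutive elements of `L`
  induction L with
  | nil => simp
  | cons b L ih =>
    rw [List.map_cons, List.isChain_cons] at hL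
    simp only [List.flatMap_cons, List.cons_append, List.nil_append, List.infix_cons_iff, not_or]
    refine ⟨?_, ?_, ih hL.2⟩
    all_goals
      cases L with
      | nil => simp [List.replicate_succ]
      | cons c L =>
        have hbc : g b ≠ g c := by simpa using hL.1
        simp only [List.flatMap_cons, List.replicate_succ, List.replicate_zero, List.cons_append,
          List.nil_append, List.cons_prefix_cons]
        grind

lemma snd_le_three_of_mem_rle_flatMap {β : Type*} (f g : β → ℕ) {L : List β}
    (hL : (L.map g).IsChain (· ≠ ·)) {q : ℕ × ℕ} (hq : q ∈ rle (L.flatMap fun b => [f b, g b])) :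
    q.2 ≤ 3 := by
  by_contra! h
  refine not_replicate_four_infix_flatMap f g hL q.1 ?_
  exact (List.infix_replicate_iff.mpr ⟨by simp; omega, by simp⟩).trans
    (replicate_infix_of_mem_rle hq)

/-- Adult seeds give constant sequences: `Z³(s) = Z²(s)`, so `Zⁿ(s)` is eventually constant. -/
theorem Z_adult_eventually_constant (s : List ℕ) (hdig : ∀ d ∈ s, d ≤ 9)
    (hadult : ∀ d ∈ s, 4 ≤ d) (hrun : ∀ p ∈ rle s, p.2 ≤ 9) :
    Z (Z (Z s)) = Z (Z s) ∧ ∀ n ≥ 2, Z^[n] s = Z^[2] s := by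
  have hZ : Z s = (rle s).flatMap fun p => [max p.2 p.1, p.1] :=
    Z_eq_flatMap_of_runs_le_nine fun p hp => ⟨hdig _ (fst_mem_of_mem_rle hp), hrun p hp⟩
  have hdigits : ∀ d ∈ Z s, 4 ≤ d ∧ d ≤ 9 := by
    rw [hZ]
    simp only [List.mem_flatMap, List.mem_cons, List.not_mem_nil, or_false]
    rintro d ⟨p, hp, hd⟩
    have := hadult _ (fst_mem_of_mem_rle hp)
    have := hdig _ (fst_mem_of_mem_rle hp)
    have := hrun p hp
    rcases hd with rfl | rfl <;> omega
  have hshort : ∀ q ∈ rle (Z s), q.2 ≤ 3 := by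
    rw [hZ]
    exact fun q => snd_le_three_of_mem_rle_flatMap _ _ (isChain_map_fst_rle s)
  have hfix : Z (Z (Z s)) = Z (Z s) := Z_Z_eq_Z fun q hq => by
    have := hdigits _ (fst_mem_of_mem_rle hq)
    have := hshort q hq
    omega
  refine ⟨hfix, fun n hn => ?_⟩
  obtain ⟨m, rfl⟩ := Nat.exists_eq_add_of_le' hn
  rw [Function.iterate_add_apply]
  exact Function.iterate_fixed hfix m
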